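/- For the linear RNN memory function ρ̂(s) = cᵀ e^{Ws} U with W a real m×m matrix whose eigenvalues all have real part ≤ -λ < 0, there exists a constant C > 0 such that |ρ̂(s)| ≤ C e^{-λ s/2} for all s ≥ 0; consequently, for ρ(s) = 1/(1+s)^p with p > 1, sup_{s ≥ 0} e^{λ s/4} |ρ(s) - ρ̂(s)| = ∞ unless ρ ≡ ρ̂, i.e., linear RNNs cannot match polynomial memory uniformly in exponentially weighted norm. -/

import Mathlib

/-!
Over `ℂ` every vector is a sum of generalized eigenvectors of the matrix `A`. On a generalized
eigenvector `x` for `μ`, `exp (s • A) x = e^{sμ} ∑_{i<k} sⁱ/i! (A - μ)ⁱ x` is a polynomial in `s`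
times `e^{s Re μ}`, and the polynomial is absorbed by any exponential margin, so `Re μ ≤ a` yields
the rate `e^{bs}` for every `b > a`. With `a = -λ`, `b = -λ/2` this gives
`|ρ̂ s| ≤ C e^{-λs/2}`, hence `e^{λs/4} |ρ̂ s| ≤ C`, while `e^{λs/4} (1 + s)^{-p} → ∞`; so
`e^{λs/4} |ρ s - ρ̂ s|` is unbounded.
-/

open NormedSpace Finset
open scoped Nat Matrix

theorem pow_div_factorial_le_exp_mul_div_pow {δ s : ℝ} (hδ : 0 < δ) (hs : 0 ≤ s) (k : ℕ) :
    s ^ k / k ! ≤ Real.exp (δ * s) / δ ^ k := by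
  rw [le_div_iff₀ (by positivity), div_mul_eq_mul_div, ← mul_pow, mul_comm s]
  exact Real.pow_div_factorial_le_exp _ (mul_nonneg hδ.le hs) k

namespace Matrix

variable {n : Type*} [Fintype n]

theorem norm_dotProduct_le {R : Type*} [SeminormedRing R] (v w : n → R) :
    ‖v ⬝ᵥ w‖ ≤ (∑ i, ‖v i‖) * ‖w‖ := by
  rw [sum_mul]
  exact (norm_sum_le _ _).trans (sum_le_sum fun i _ => (norm_mul_le _ _).trans
    (mul_le_mul_of_nonneg_left (norm_le_pi_norm w i) (norm_nonneg _)))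

variable [DecidableEq n]

theorem exp_smul_mulVec_eq_sum_of_pow_mulVec_eq_zero (N : Matrix n n ℂ) {x : n → ℂ} {k : ℕ}
    (hx : N ^ k *ᵥ x = 0) (t : ℂ) :
    exp (t • N) *ᵥ x = ∑ i ∈ range k, (t ^ i / i !) • (N ^ i *ᵥ x) := by
  open scoped Norms.Operator in
  have hsum := (exp_series_hasSum_exp' (𝕂 := ℂ) (t • N)).map (mulVec.addMonoidHomLeft x)
    (continuous_id.matrix_mulVec continuous_const)
  simp only [Function.comp_def, mulVec.addMonoidHomLeft, AddMonoidHom.coe_mk, ZeroHom.coe_mk,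
    smul_pow, smul_smul, smul_mulVec, ← div_eq_inv_mul] at hsum
  refine hsum.unique (hasSum_sum_of_ne_finset_zero fun i hi => ?_)
  obtain ⟨j, rfl⟩ := Nat.exists_eq_add_of_le (not_lt.1 (mem_range.not.1 hi))
  rw [add_comm, pow_add N, ← mulVec_mulVec, hx, mulVec_zero, smul_zero]

theorem exp_smul_eq_cexp_smul_exp_smul_sub (A : Matrix n n ℂ) (μ t : ℂ) :
    exp (t • A) = Complex.exp (t * μ) • exp (t • (A - μ • 1)) := by
  have hsplit : t • A = algebraMap ℂ _ (t * μ) + t • (A - μ • 1) := by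
    rw [Algebra.algebraMap_eq_smul_one, smul_sub, smul_smul]; abel
  have hscalar : exp (algebraMap ℂ (Matrix n n ℂ) (t * μ)) = algebraMap ℂ _ (exp (t * μ)) := by
    open scoped Norms.Operator in exact (algebraMap_exp_comm _).symm
  rw [hsplit, exp_add_of_commute _ _ (Algebra.commute_algebraMap_left _ _), hscalar,
    ← Complex.exp_eq_exp_ℂ, ← Algebra.smul_def]

theorem exists_norm_exp_smul_mulVec_le_of_pow_sub_mulVec_eq_zero (A : Matrix n n ℂ) {μ : ℂ}
    {x : n → ℂ} {k : ℕ} (hx : (A - μ • 1) ^ k *ᵥ x = 0) {a b : ℝ} (hμ : μ.re ≤ a) (hab : a < b) :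
    ∃ C, ∀ s : ℝ, 0 ≤ s → ‖exp (s • A) *ᵥ x‖ ≤ C * Real.exp (b * s) := by
  set N := A - μ • 1
  refine ⟨∑ i ∈ range k, ‖N ^ i *ᵥ x‖ / (b - a) ^ i, fun s hs => ?_⟩
  calc ‖exp (s • A) *ᵥ x‖
      = Real.exp (s * μ.re) * ‖∑ i ∈ range k, ((s : ℂ) ^ i / i !) • (N ^ i *ᵥ x)‖ := by
        rw [← Complex.coe_smul, exp_smul_eq_cexp_smul_exp_smul_sub A μ, smul_mulVec,
          exp_smul_mulVec_eq_sum_of_pow_mulVec_eq_zero N hx, norm_smul, Complex.norm_exp,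
          Complex.re_ofReal_mul]
    _ ≤ Real.exp (a * s) * ∑ i ∈ range k, s ^ i / i ! * ‖N ^ i *ᵥ x‖ := by
        refine mul_le_mul (Real.exp_le_exp.2 (by nlinarith)) ?_ (norm_nonneg _) (by positivity)
        refine (norm_sum_le _ _).trans_eq (sum_congr rfl fun i _ => ?_)
        rw [norm_smul, norm_div, norm_pow, Complex.norm_real, Complex.norm_natCast,
          Real.norm_of_nonneg hs]
    _ ≤ Real.exp (a * s) *
          ∑ i ∈ range k, Real.exp ((b - a) * s) / (b - a) ^ i * ‖N ^ i *ᵥ x‖ := by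
        gcongr _ * ∑ i ∈ _, ?_ * _ with i
        exact pow_div_factorial_le_exp_mul_div_pow (sub_pos.2 hab) hs i
    _ = (∑ i ∈ range k, ‖N ^ i *ᵥ x‖ / (b - a) ^ i) * Real.exp (b * s) := by
        rw [mul_sum, sum_mul]
        refine sum_congr rfl fun i _ => ?_
        rw [show b * s = a * s + (b - a) * s by ring, Real.exp_add]
        ring

theorem exists_norm_exp_smul_mulVec_le (A : Matrix n n ℂ) {a b : ℝ}
    (hA : ∀ μ ∈ spectrum ℂ A, μ.re ≤ a) (hab : a < b) (x : n → ℂ) :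
    ∃ C, ∀ s : ℝ, 0 ≤ s → ‖exp (s • A) *ᵥ x‖ ≤ C * Real.exp (b * s) := by
  have hx : x ∈ ⨆ μ, Module.End.maxGenEigenspace (toLin' A) μ := by
    rw [Module.End.iSup_maxGenEigenspace_eq_top]; trivial
  induction hx using Submodule.iSup_induction' with
  | mem μ y hy =>
    rcases eq_or_ne y 0 with rfl | hy0
    · exact ⟨0, by simp⟩
    have hμ : μ ∈ spectrum ℂ A := by
      rw [← spectrum_toLin']
      exact (Module.End.HasUnifEigenvalue.lt zero_lt_one
        ((Submodule.ne_bot_iff _).2 ⟨y, hy, hy0⟩)).mem_spectrum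
    obtain ⟨k, hk⟩ := (Module.End.mem_maxGenEigenspace _ _ _).1 hy
    have hpow : (toLin' A - μ • 1) ^ k = toLin' ((A - μ • 1) ^ k) := by
      change _ = toLinAlgEquiv' _
      rw [map_pow, map_sub, map_smul, map_one]
      rfl
    rw [hpow, toLin'_apply] at hk
    exact exists_norm_exp_smul_mulVec_le_of_pow_sub_mulVec_eq_zero A hk (hA μ hμ) hab
  | zero => exact ⟨0, by simp⟩
  | add y z _ _ hy hz =>
    obtain ⟨C₁, h₁⟩ := hy
    obtain ⟨C₂, h₂⟩ := hz
    refine ⟨C₁ + C₂, fun s hs => ?_⟩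
    rw [mulVec_add, add_mul]
    exact (norm_add_le _ _).trans (add_le_add (h₁ s hs) (h₂ s hs))

theorem exp_map_ofReal (M : Matrix n n ℝ) :
    (exp M).map Complex.ofReal = exp (M.map Complex.ofReal) := by
  open scoped Norms.Operator in
  exact map_exp Complex.ofRealHom.mapMatrix (continuous_id.matrix_map Complex.continuous_ofReal) M

theorem exists_norm_real_exp_smul_mulVec_le (W : Matrix n n ℝ) {a b : ℝ}
    (hW : ∀ μ ∈ spectrum ℂ (W.map Complex.ofReal), μ.re ≤ a) (hab : a < b) (x : n → ℝ) :
    ∃ C, ∀ s : ℝ, 0 ≤ s → ‖exp (s • W) *ᵥ x‖ ≤ C * Real.exp (b * s) := by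
  obtain ⟨C, hC⟩ := exists_norm_exp_smul_mulVec_le _ hW hab fun i => (x i : ℂ)
  refine ⟨C, fun s hs => ?_⟩
  have hcomplexify : (fun i => ((exp (s • W) *ᵥ x) i : ℂ))
      = exp (s • W.map Complex.ofReal) *ᵥ fun i => (x i : ℂ) := by
    have hsmul : (s • W).map Complex.ofReal = s • W.map Complex.ofReal := by
      ext; simp
    ext i
    rw [← Complex.ofRealHom_eq_coe, RingHom.map_mulVec]
    change ((exp (s • W)).map Complex.ofReal *ᵥ fun j => (x j : ℂ)) i = _
    rw [exp_map_ofReal, hsmul]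
  have hnorm : ‖fun i => ((exp (s • W) *ᵥ x) i : ℂ)‖ = ‖exp (s • W) *ᵥ x‖ := by
    simp [Pi.norm_def, Complex.nnnorm_real]
  rw [← hnorm, hcomplexify]
  exact hC s hs

end Matrix

open Filter

theorem tendsto_exp_mul_mul_one_add_rpow_neg_atTop {κ : ℝ} (hκ : 0 < κ) (p : ℝ) :
    Tendsto (fun s => Real.exp (κ * s) * (1 + s) ^ (-p)) atTop atTop := by
  have h := ((tendsto_exp_mul_div_rpow_atTop p κ hκ).comp
    (tendsto_atTop_add_const_left _ 1 tendsto_id)).const_mul_atTop (Real.exp_pos (-κ))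
  refine h.congr' ((eventually_ge_atTop 0).mono fun s hs => ?_)
  simp only [Function.comp_apply, id]
  rw [Real.rpow_neg (by linarith), div_eq_mul_inv, ← mul_assoc, ← Real.exp_add]
  ring_nf

theorem not_bddAbove_mul_abs_sub_of_tendsto {w f g : ℝ → ℝ} {B : ℝ} (hw : ∀ s, 0 ≤ w s)
    (hg : ∀ s, 0 ≤ s → w s * |g s| ≤ B) (hf : Tendsto (fun s => w s * f s) atTop atTop) :
    ¬ BddAbove {v | ∃ s, 0 ≤ s ∧ v = w s * |f s - g s|} := by
  rintro ⟨M, hM⟩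
  obtain ⟨s, hs, hs0⟩ := ((hf.eventually_gt_atTop (M + B)).and (eventually_ge_atTop 0)).exists
  have htriangle : w s * f s ≤ w s * |f s - g s| + w s * |g s| := by
    rw [← mul_add]
    exact mul_le_mul_of_nonneg_left (by linarith [le_abs_self (f s - g s), le_abs_self (g s)])
      (hw s)
  linarith [hM ⟨s, hs0, rfl⟩, hg s hs0]

theorem linear_rnn_exponential_memory_limitation_general
    (m : ℕ) (W : Matrix (Fin m) (Fin m) ℝ) (c U : Fin m → ℝ)
    (lam p : ℝ) (hlam : 0 < lam)
    (hspec : ∀ μ : ℂ, μ ∈ spectrum ℂ (W.map (Complex.ofReal)) → μ.re ≤ -lam)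
    (ρhat ρ : ℝ → ℝ)
    (hρhat : ∀ s : ℝ, ρhat s = dotProduct c ((NormedSpace.exp (s • W)).mulVec U))
    (hρ : ∀ s : ℝ, ρ s = (1 + s) ^ (-p)) :
    (∃ C : ℝ, 0 < C ∧ ∀ s : ℝ, 0 ≤ s → |ρhat s| ≤ C * Real.exp (-lam * s / 2)) ∧
    (¬ (∀ s : ℝ, 0 ≤ s → ρ s = ρhat s) →
      ¬ BddAbove {v : ℝ | ∃ s : ℝ, 0 ≤ s ∧
          v = Real.exp (lam * s / 4) * |ρ s - ρhat s|}) := by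
  obtain ⟨C, hC⟩ := Matrix.exists_norm_real_exp_smul_mulVec_le W hspec
    (by linarith : -lam < -lam / 2) U
  set K := max ((∑ i, ‖c i‖) * C) 1
  have hK : 0 < K := lt_max_of_lt_right one_pos
  have hdecay : ∀ s, 0 ≤ s → |ρhat s| ≤ K * Real.exp (-lam * s / 2) := fun s hs => by
    rw [hρhat, ← Real.norm_eq_abs]
    calc ‖c ⬝ᵥ exp (s • W) *ᵥ U‖
        ≤ (∑ i, ‖c i‖) * ‖exp (s • W) *ᵥ U‖ := Matrix.norm_dotProduct_le _ _
      _ ≤ (∑ i, ‖c i‖) * (C * Real.exp (-lam / 2 * s)) := by gcongr; exact hC s hs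
      _ ≤ K * Real.exp (-lam * s / 2) := by
        rw [← mul_assoc, div_mul_eq_mul_div]
        gcongr
        exact le_max_left _ _
  have hweighted : ∀ s, 0 ≤ s → Real.exp (lam * s / 4) * |ρhat s| ≤ K := fun s hs =>
    calc Real.exp (lam * s / 4) * |ρhat s|
        ≤ Real.exp (lam * s / 4) * (K * Real.exp (-lam * s / 2)) := by gcongr; exact hdecay s hs
      _ = K * Real.exp (-(lam * s / 4)) := by rw [mul_left_comm, ← Real.exp_add]; ring_nf
      _ ≤ K := mul_le_of_le_one_right hK.le (Real.exp_le_one_iff.2 (by nlinarith))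
  have hρ_weighted : Tendsto (fun s => Real.exp (lam * s / 4) * ρ s) atTop atTop :=
    (tendsto_exp_mul_mul_one_add_rpow_neg_atTop (by positivity : 0 < lam / 4) p).congr
      fun s => by rw [hρ, mul_div_right_comm]
  exact ⟨⟨K, hK, hdecay⟩, fun _ => not_bddAbove_mul_abs_sub_of_tendsto
    (fun s => (Real.exp_pos _).le) hweighted hρ_weighted⟩

theorem linear_rnn_exponential_memory_limitation
    (m : ℕ) (W : Matrix (Fin m) (Fin m) ℝ) (c U : Fin m → ℝ)
    (lam p : ℝ) (hlam : 0 < lam) (hp : 1 < p)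
    (hspec : ∀ μ : ℂ, μ ∈ spectrum ℂ (W.map (Complex.ofReal)) → μ.re ≤ -lam)
    (ρhat ρ : ℝ → ℝ)
    (hρhat : ∀ s : ℝ, ρhat s = dotProduct c ((NormedSpace.exp (s • W)).mulVec U))
    (hρ : ∀ s : ℝ, ρ s = (1 + s) ^ (-p)) :
    (∃ C : ℝ, 0 < C ∧ ∀ s : ℝ, 0 ≤ s → |ρhat s| ≤ C * Real.exp (-lam * s / 2)) ∧
    (¬ (∀ s : ℝ, 0 ≤ s → ρ s = ρhat s) →
      ¬ BddAbove {v : ℝ | ∃ s : ℝ, 0 ≤ s ∧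
          v = Real.exp (lam * s / 4) * |ρ s - ρhat s|}) :=
  linear_rnn_exponential_memory_limitation_general m W c U lam p hlam hspec ρhat ρ hρhat hρ
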